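/- For any 0/1 matrix A with a SUM-covering of spectral weight σ₀, the Kronecker power A^{⊗n} has a SUM-covering of complexity at most 2·σ₀^n·max over narrowness terms; in particular, using the covering of D₂ by a 2×1 rectangle and a 1×1 rectangle (spectral weight 1+√2, all rectangles of narrowness ≤ 2), one obtains SUM₂(D_{2^n}) ≤ C·(1+√2)^n for an absolute constant C. -/

import Mathlib

/-- A rank-1 0/1 matrix (rectangle). -/
def IsRectangle {α β : Type*} (R : Matrix α β ℤ) : Prop :=
  ∃ u v, (∀ x, u x = 0 ∨ u x = 1) ∧ (∀ y, v y = 0 ∨ v y = 1) ∧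
    R = Matrix.vecMulVec u v

/-- Number of nonzero rows of a matrix. -/
noncomputable def numRows {α β : Type*} [Fintype α] [Fintype β] (R : Matrix α β ℤ) : ℕ :=
  (@Finset.filter _ (fun i => ∃ j, R i j ≠ 0) (fun _ => Fintype.decidableExistsFintype) Finset.univ).card

/-- Number of nonzero columns of a matrix. -/
noncomputable def numCols {α β : Type*} [Fintype α] [Fintype β] (R : Matrix α β ℤ) : ℕ :=
  (Finset.univ.filter fun j => ∃ i, R i j ≠ 0).card

/-- The disjointness matrix D_{2^n} = D₂^{⊗n}. -/
def Dmat (n : ℕ) : Matrix (Fin n → Bool) (Fin n → Bool) ℤ :=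
  Matrix.of fun u v => if ∀ i, ¬(u i = true ∧ v i = true) then 1 else 0

/-!
Write `D₂ = [[1,1],[1,0]]` as the sum of the rectangles `{0,1} × {0}` (2×1) and `{0} × {1}`
(1×1). Splitting off the first coordinate, `D_{2^(n+1)}` is covered by the Kronecker products of
these two rectangles with the rectangles `S × T` covering `D_{2^n}`; the 2×1 block is combined
with the transpose `T × S` (allowed since `D_{2^n}` is symmetric), which keeps every rectangle
between square and twice as tall as wide.
Weighting a rectangle `S × T` by `|S| + √2 |T|`, each step multiplies the total weight by the
spectral weight `1 + √2` of the covering of `D₂`, and for `|S| ≤ 2 |T|` the complexity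
`|S| + |T|` is at most `3 / (2 + √2)` times the weight.
-/

open Finset Matrix

section Rectangle

variable {α β : Type*} [DecidableEq α] [DecidableEq β]

def rectMatrix (S : Finset α) (T : Finset β) : Matrix α β ℤ :=
  Matrix.vecMulVec (fun i => if i ∈ S then 1 else 0) (fun j => if j ∈ T then 1 else 0)

theorem rectMatrix_apply (S : Finset α) (T : Finset β) (i : α) (j : β) :
    rectMatrix S T i j = if i ∈ S ∧ j ∈ T then 1 else 0 := by
  by_cases i ∈ S <;> by_cases j ∈ T <;> simp [rectMatrix, vecMulVec_apply, *]

theorem isRectangle_rectMatrix (S : Finset α) (T : Finset β) : IsRectangle (rectMatrix S T) :=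
  ⟨_, _, fun i => by by_cases i ∈ S <;> simp [*],
    fun j => by by_cases j ∈ T <;> simp [*], rfl⟩

theorem rectMatrix_transpose (S : Finset α) (T : Finset β) :
    (rectMatrix S T)ᵀ = rectMatrix T S := by
  ext j i
  simp only [Matrix.transpose_apply, rectMatrix_apply, and_comm]

variable [Fintype α] [Fintype β]

theorem numRows_rectMatrix (S : Finset α) {T : Finset β} (hT : T.Nonempty) :
    numRows (rectMatrix S T) = #S := by
  unfold numRows
  congr 1
  ext i
  obtain ⟨j, hj⟩ := hT
  simpa [rectMatrix_apply] using fun _ => ⟨j, hj⟩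

theorem numCols_rectMatrix {S : Finset α} (T : Finset β) (hS : S.Nonempty) :
    numCols (rectMatrix S T) = #T := by
  unfold numCols
  congr 1
  ext j
  obtain ⟨i, hi⟩ := hS
  simpa [rectMatrix_apply] using fun _ => ⟨i, hi⟩

end Rectangle

section ConsProd

variable {α : Type*} {n : ℕ}

def Finset.consProd (P : Finset α) (S : Finset (Fin n → α)) : Finset (Fin (n + 1) → α) :=
  (P ×ˢ S).map (Fin.consEquiv fun _ => α).toEmbedding

theorem Finset.mem_consProd {P : Finset α} {S : Finset (Fin n → α)} {u : Fin (n + 1) → α} :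
    u ∈ P.consProd S ↔ u 0 ∈ P ∧ Fin.tail u ∈ S := by
  simp [Finset.consProd, Finset.mem_map_equiv]

theorem Finset.card_consProd (P : Finset α) (S : Finset (Fin n → α)) :
    #(P.consProd S) = #P * #S := by
  simp [Finset.consProd, card_product]

theorem rectMatrix_consProd_apply [DecidableEq α] (P Q : Finset α) (S T : Finset (Fin n → α))
    (u v : Fin (n + 1) → α) :
    rectMatrix (P.consProd S) (Q.consProd T) u v
      = rectMatrix P Q (u 0) (v 0) * rectMatrix S T (Fin.tail u) (Fin.tail v) := by
  simp only [rectMatrix_apply, Finset.mem_consProd]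
  by_cases u 0 ∈ P <;> by_cases v 0 ∈ Q <;> simp [*]

end ConsProd

theorem Matrix.list_sum_apply {m n R : Type*} [AddMonoid R] (L : List (Matrix m n R)) (i : m)
    (j : n) : L.sum i j = (L.map fun M => M i j).sum :=
  map_list_sum (entryAddMonoidHom R i j) L

theorem Dmat_succ_apply (n : ℕ) (u v : Fin (n + 1) → Bool) :
    Dmat (n + 1) u v =
      (if u 0 = true ∧ v 0 = true then 0 else 1) * Dmat n (Fin.tail u) (Fin.tail v) := by
  simp only [Dmat, Matrix.of_apply, Fin.forall_fin_succ, Fin.tail]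
  split_ifs <;> simp_all

theorem Dmat_transpose (n : ℕ) : (Dmat n)ᵀ = Dmat n := by
  ext u v
  simp only [Dmat, Matrix.transpose_apply, Matrix.of_apply, and_comm]

def dmatCover : (n : ℕ) → List (Finset (Fin n → Bool) × Finset (Fin n → Bool))
  | 0 => [(univ, univ)]
  | n + 1 =>
      (dmatCover n).map (fun p => (consProd univ p.2, consProd {false} p.1)) ++
      (dmatCover n).map (fun p => (consProd {false} p.1, consProd {true} p.2))

theorem sum_rectMatrix_dmatCover (n : ℕ) :
    ((dmatCover n).map fun p => rectMatrix p.1 p.2).sum = Dmat n := by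
  induction n with
  | zero => ext u v; simp [dmatCover, rectMatrix_apply, Dmat, -univ_unique]
  | succ n ih =>
    have ihT : ((dmatCover n).map fun p => rectMatrix p.2 p.1).sum = Dmat n := by
      rw [← Dmat_transpose, ← ih, transpose_list_sum, List.map_map]
      simp only [Function.comp_def, rectMatrix_transpose]
    ext u v
    have hD := congrFun₂ ih (Fin.tail u) (Fin.tail v)
    have hDT := congrFun₂ ihT (Fin.tail u) (Fin.tail v)
    simp only [dmatCover, List.map_append, List.sum_append, list_sum_apply, List.map_map,
      Function.comp_def, rectMatrix_consProd_apply, List.sum_map_mul_left] at hD hDT ⊢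
    rw [hD, hDT, Dmat_succ_apply]
    cases u 0 <;> cases v 0 <;> simp [rectMatrix_apply]

theorem card_bounds_of_mem_dmatCover {n : ℕ}
    {p : Finset (Fin n → Bool) × Finset (Fin n → Bool)} (hp : p ∈ dmatCover n) :
    0 < #p.2 ∧ #p.2 ≤ #p.1 ∧ #p.1 ≤ 2 * #p.2 := by
  induction n with
  | zero => simp_all [dmatCover]
  | succ n ih =>
    simp only [dmatCover, List.mem_append, List.mem_map] at hp
    rcases hp with ⟨q, hq, rfl⟩ | ⟨q, hq, rfl⟩ <;>
      · simp only [Finset.card_consProd, card_univ, Fintype.card_bool, card_singleton]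
        have := ih hq
        omega

theorem sum_weight_dmatCover (n : ℕ) :
    ((dmatCover n).map fun p => (#p.1 : ℝ) + √2 * #p.2).sum = (1 + √2) ^ (n + 1) := by
  induction n with
  | zero => simp [dmatCover]
  | succ n ih =>
    have h2 : √2 * √2 = 2 := Real.mul_self_sqrt (by norm_num)
    have hstep : ∀ p : Finset (Fin n → Bool) × Finset (Fin n → Bool),
        ((2 * #p.2 : ℕ) : ℝ) + √2 * #p.1 = √2 * ((#p.1 : ℝ) + √2 * #p.2) := by
      intro p
      push_cast
      linear_combination -(#p.2 : ℝ) * h2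
    simp only [dmatCover, List.map_append, List.map_map, List.sum_append, Function.comp_def,
      Finset.card_consProd, card_univ, Fintype.card_bool, card_singleton, one_mul, hstep,
      List.sum_map_mul_left, ih]
    ring

theorem add_le_div_mul_weight {a b : ℝ} (hab : a ≤ 2 * b) :
    a + b ≤ 3 / (2 + √2) * (a + √2 * b) := by
  have h2 : √2 * √2 = 2 := Real.mul_self_sqrt (by norm_num)
  have h1 : 1 ≤ √2 := Real.one_le_sqrt.mpr (by norm_num)
  rw [div_mul_eq_mul_div, le_div_iff₀ (by positivity)]
  nlinarith [mul_nonneg (sub_nonneg.mpr h1) (sub_nonneg.mpr hab)]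

theorem sum_card_add_card_dmatCover_le (n : ℕ) :
    ((dmatCover n).map fun p => (#p.1 : ℝ) + #p.2).sum ≤ 3 / √2 * (1 + √2) ^ n := by
  have h2 : √2 * √2 = 2 := Real.mul_self_sqrt (by norm_num)
  calc ((dmatCover n).map fun p => (#p.1 : ℝ) + #p.2).sum
      ≤ ((dmatCover n).map fun p => 3 / (2 + √2) * ((#p.1 : ℝ) + √2 * #p.2)).sum :=
        List.sum_le_sum fun p hp =>
          add_le_div_mul_weight (by exact_mod_cast (card_bounds_of_mem_dmatCover hp).2.2)
    _ = 3 / √2 * (1 + √2) ^ n := by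
      rw [List.sum_map_mul_left, sum_weight_dmatCover, pow_succ]
      field_simp
      linear_combination h2

theorem numRows_numCols_of_mem_dmatCover {n : ℕ}
    {p : Finset (Fin n → Bool) × Finset (Fin n → Bool)} (hp : p ∈ dmatCover n) :
    numRows (rectMatrix p.1 p.2) = #p.1 ∧ numCols (rectMatrix p.1 p.2) = #p.2 := by
  obtain ⟨hT, hTS, -⟩ := card_bounds_of_mem_dmatCover hp
  exact ⟨numRows_rectMatrix _ (card_pos.mp hT),
    numCols_rectMatrix _ (card_pos.mp (hT.trans_le hTS))⟩

/-- Taking the n-fold Kronecker product of the covering {2×1 rectangle, 1×1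
rectangle} of D₂, orienting each product rectangle to have narrowness ≤ 2,
yields a SUM-covering of D_{2^n} of complexity at most (3/√2)·(1+√2)^n;
in particular SUM₂(D_{2^n}) ≤ C·(1+√2)^n. -/
theorem stmt_7 (n : ℕ) :
    ∃ L : List (Matrix (Fin n → Bool) (Fin n → Bool) ℤ),
      (∀ R ∈ L, IsRectangle R) ∧ L.sum = Dmat n ∧
        (∀ R ∈ L, max (numRows R) (numCols R) ≤ 2 * min (numRows R) (numCols R)) ∧
        ((L.map fun R => ((numRows R : ℝ) + (numCols R : ℝ))).sum ≤
          3 / Real.sqrt 2 * (1 + Real.sqrt 2) ^ n) := by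
  refine ⟨(dmatCover n).map fun p => rectMatrix p.1 p.2, ?_, sum_rectMatrix_dmatCover n, ?_, ?_⟩
  · simp only [List.forall_mem_map]
    exact fun p _ => isRectangle_rectMatrix p.1 p.2
  · simp only [List.forall_mem_map]
    intro p hp
    obtain ⟨hrows, hcols⟩ := numRows_numCols_of_mem_dmatCover hp
    have := card_bounds_of_mem_dmatCover hp
    rw [hrows, hcols]
    omega
  · rw [List.map_map]
    convert sum_card_add_card_dmatCover_le n using 2
    refine List.map_congr_left fun p hp => ?_
    simp [numRows_numCols_of_mem_dmatCover hp]
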